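/- arXiv:2312.03355 — 3 statements merged into one kernel-verified Lean document; each statement's English description precedes it below -/
import Mathlib

section
/- Let B be a topological space, let V be a finite-dimensional real vector space, and let E be a topological real vector bundle of finite rank over B with total space Tot(E). Let φ : B × V → Tot(E) be a continuous map such that for every b ∈ B, φ(b,·) is a linear map from V onto the fiber E_b (i.e. it lands in E_b, is linear, and is surjective). Then the map φ : B × V → Tot(E) is a fiber bundle: every point e ∈ Tot(E) lying over b₀ ∈ B has an open neighborhood A ⊆ Tot(E) together with a homeomorphism φ⁻¹(A) ≅ A × ker(φ(b₀,·)) commuting with the projections to A. -/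
/-!
In a local trivialization around `b₀` the fibre maps `φ(b, ·)` become a continuous family of
linear maps `L b : V → F`, surjective at `b₀`. If `P : V → K` is a projection onto
`K = ker (L b₀)`, then `v ↦ (L b v, P v)` is an isomorphism `V ≃ F × K` at `b = b₀`, hence for
all `b` in an open neighbourhood `U` of `b₀`, with inverse depending continuously on `b`. Over
`A = π⁻¹ U` this gives `φ⁻¹ A ≃ U × V ≃ U × F × K ≃ A × K`.
-/

open Bundle Function

section InvertibleFamily

variable {𝕜 X E F : Type*} [NontriviallyNormedField 𝕜] [TopologicalSpace X]
  [NormedAddCommGroup E] [NormedSpace 𝕜 E] [CompleteSpace E]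
  [NormedAddCommGroup F] [NormedSpace 𝕜 F]

theorem ContinuousLinearMap.isOpen_setOf_isInvertible :
    IsOpen {f : E →L[𝕜] F | f.IsInvertible} :=
  ContinuousLinearEquiv.isOpen

theorem ContinuousOn.inverse_of_isInvertible {G : X → E →L[𝕜] F} {s : Set X}
    (hG : ContinuousOn G s) (hinv : ∀ x ∈ s, (G x).IsInvertible) :
    ContinuousOn (fun x => (G x).inverse) s := fun x hx =>
  ((hinv x hx).contDiffAt_map_inverse (n := 0)).continuousAt.comp_continuousWithinAt (hG x hx)

noncomputable def ContinuousOn.prodHomeomorphOfIsInvertible {G : X → E →L[𝕜] F} {s : Set X}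
    (hG : ContinuousOn G s) (hinv : ∀ x ∈ s, (G x).IsInvertible) : s × E ≃ₜ s × F where
  toFun p := (p.1, G p.1 p.2)
  invFun q := (q.1, (G q.1).inverse q.2)
  left_inv p := by simp [(hinv _ p.1.2).inverse_apply_self]
  right_inv q := by simp [(hinv _ q.1.2).self_apply_inverse]
  continuous_toFun := continuous_fst.prodMk
    ((hG.domRestrict.comp continuous_fst).clm_apply continuous_snd)
  continuous_invFun := continuous_fst.prodMk
    (((hG.inverse_of_isInvertible hinv).domRestrict.comp continuous_fst).clm_apply continuous_snd)

end InvertibleFamily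

section Splitting

variable {𝕜 X V F : Type*} [NontriviallyNormedField 𝕜] [CompleteSpace 𝕜] [TopologicalSpace X]
  [NormedAddCommGroup V] [NormedSpace 𝕜 V] [FiniteDimensional 𝕜 V]
  [NormedAddCommGroup F] [NormedSpace 𝕜 F]

theorem ContinuousLinearMap.isInvertible_prod_of_isCompl_ker {G : Type*} [NormedAddCommGroup G]
    [NormedSpace 𝕜 G] {f : V →L[𝕜] F} {g : V →L[𝕜] G} (hf : Surjective f) (hg : Surjective g)
    (hfg : IsCompl (LinearMap.ker (f : V →ₗ[𝕜] F)) (LinearMap.ker (g : V →ₗ[𝕜] G))) :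
    (f.prod g).IsInvertible :=
  ⟨(LinearMap.equivProdOfSurjectiveOfIsCompl (f : V →ₗ[𝕜] F) g (LinearMap.range_eq_top.2 hf)
    (LinearMap.range_eq_top.2 hg) hfg).toContinuousLinearEquiv, rfl⟩

theorem ContinuousOn.exists_isOpen_isInvertible_prod {L : X → V →L[𝕜] F} {s : Set X}
    (hL : ContinuousOn L s) (hs : IsOpen s) {x₀ : X} (hx₀ : x₀ ∈ s) (hsurj : Surjective (L x₀))
    {K : Submodule 𝕜 V} (hK : LinearMap.ker (L x₀ : V →ₗ[𝕜] F) = K) :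
    ∃ P : V →L[𝕜] K, ∃ U, IsOpen U ∧ x₀ ∈ U ∧ U ⊆ s ∧
      ContinuousOn (fun x => (L x).prod P) U ∧ ∀ x ∈ U, ((L x).prod P).IsInvertible := by
  have : CompleteSpace V := FiniteDimensional.complete 𝕜 V
  obtain ⟨W, hKW⟩ := K.exists_isCompl
  let P : V →L[𝕜] K := (K.projectionOnto W hKW).toContinuousLinearMap
  have hG : ContinuousOn (fun x => (L x).prod P) s :=
    continuousOn_clm_apply.2 fun v => (continuousOn_clm_apply.1 hL v).prodMk continuousOn_const
  refine ⟨P, s ∩ {x | ((L x).prod P).IsInvertible},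
    hG.isOpen_inter_preimage hs ContinuousLinearMap.isOpen_setOf_isInvertible, ⟨hx₀, ?_⟩,
    Set.inter_subset_left, hG.mono Set.inter_subset_left, fun x hx => hx.2⟩
  refine ContinuousLinearMap.isInvertible_prod_of_isCompl_ker hsurj
    (K.projectionOnto_surjective hKW) ?_
  rw [hK, LinearMap.coe_toContinuousLinearMap, K.ker_projectionOnto hKW]
  exact hKW

end Splitting

section Preimage

open Set

variable {X Y Z : Type*} [TopologicalSpace X] [TopologicalSpace Y]

def Homeomorph.preimageOfCompEqFst {f : X × Y → Z} {p : Z → X} (hpf : ∀ q, p (f q) = q.1)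
    (s : Set X) : f ⁻¹' (p ⁻¹' s) ≃ₜ s × Y :=
  (Homeomorph.setCongr (t := s ×ˢ univ) (by ext q; simp [hpf])).trans
    ((Homeomorph.Set.prod s univ).trans ((Homeomorph.refl s).prodCongr (Homeomorph.Set.univ Y)))

end Preimage

namespace Bundle.Trivialization

variable {𝕜 B V F : Type*} [NontriviallyNormedField 𝕜] [CompleteSpace 𝕜] [TopologicalSpace B]
  [NormedAddCommGroup V] [NormedSpace 𝕜 V] [FiniteDimensional 𝕜 V]
  [NormedAddCommGroup F] [NormedSpace 𝕜 F]
  {E : B → Type*} [∀ b, AddCommMonoid (E b)] [∀ b, Module 𝕜 (E b)]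
  [TopologicalSpace (TotalSpace F E)]
  (t : Trivialization F (π F E)) [t.IsLinear 𝕜] {ψ : ∀ b, V →ₗ[𝕜] E b} {b : B}

noncomputable def linearMapAtComp (ψ : ∀ b, V →ₗ[𝕜] E b) (b : B) : V →L[𝕜] F :=
  (t.linearMapAt 𝕜 b ∘ₗ ψ b).toContinuousLinearMap

theorem linearMapAtComp_apply (hb : b ∈ t.baseSet) (v : V) :
    t.linearMapAtComp ψ b v = (t ⟨b, ψ b v⟩).2 := by
  simp [linearMapAtComp, t.coe_linearMapAt_of_mem hb]

theorem ker_linearMapAtComp (hb : b ∈ t.baseSet) :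
    LinearMap.ker (t.linearMapAtComp ψ b : V →ₗ[𝕜] F) = LinearMap.ker (ψ b) := by
  rw [linearMapAtComp, LinearMap.coe_toContinuousLinearMap, t.linearMapAt_def_of_mem hb,
    LinearEquiv.ker_comp]

theorem surjective_linearMapAtComp (hb : b ∈ t.baseSet) (hψ : Surjective (ψ b)) :
    Surjective (t.linearMapAtComp ψ b) := by
  simp only [linearMapAtComp, LinearMap.coe_toContinuousLinearMap', LinearMap.coe_comp,
    t.linearMapAt_def_of_mem hb, LinearEquiv.coe_coe]
  exact (t.linearEquivAt 𝕜 b hb).surjective.comp hψ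

theorem continuousOn_linearMapAtComp {φ : B × V → TotalSpace F E} (hφ : Continuous φ)
    (hφψ : ∀ b v, φ (b, v) = ⟨b, ψ b v⟩) : ContinuousOn (t.linearMapAtComp ψ) t.baseSet := by
  refine continuousOn_clm_apply.2 fun v => ?_
  have hφv : ContinuousOn (fun b => t (φ (b, v))) t.baseSet :=
    t.continuousOn.comp (hφ.comp (continuous_id.prodMk continuous_const)).continuousOn
      fun b hb => by simpa [t.mem_source, hφψ] using hb
  exact (continuous_snd.comp_continuousOn hφv).congr fun b hb => by
    simp [t.linearMapAtComp_apply hb, hφψ]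

end Bundle.Trivialization

theorem fiberwise_surjective_linear_isFiberBundle_general
    {B : Type} [TopologicalSpace B]
    (V : Type) [NormedAddCommGroup V] [NormedSpace ℝ V] [FiniteDimensional ℝ V]
    (F : Type) [NormedAddCommGroup F] [NormedSpace ℝ F]
    (E : B → Type) [∀ b, AddCommGroup (E b)] [∀ b, Module ℝ (E b)]
    [∀ b, TopologicalSpace (E b)] [TopologicalSpace (TotalSpace F E)]
    [FiberBundle F E] [VectorBundle ℝ F E]
    (φ : B × V → TotalSpace F E) (hφcont : Continuous φ)
    (ψ : ∀ b, V →ₗ[ℝ] E b)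
    (hφψ : ∀ b v, φ (b, v) = TotalSpace.mk b (ψ b v))
    (hsurj : ∀ b, Function.Surjective (ψ b)) :
    ∀ e : TotalSpace F E,
      ∃ A : Set (TotalSpace F E), IsOpen A ∧ e ∈ A ∧
        ∃ h : (φ ⁻¹' A) ≃ₜ A × (LinearMap.ker (ψ e.proj)),
          ∀ z : φ ⁻¹' A, ((h z).1 : TotalSpace F E) = φ z := by
  intro e
  set t := trivializationAt F E e.proj
  have he : e.proj ∈ t.baseSet := FiberBundle.mem_baseSet_trivializationAt' _
  obtain ⟨P, U, hU, heU, hUt, hG, hinv⟩ :=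
    (t.continuousOn_linearMapAtComp hφcont hφψ).exists_isOpen_isInvertible_prod t.open_baseSet he
      (t.surjective_linearMapAtComp he (hsurj _)) (t.ker_linearMapAtComp he)
  refine ⟨π F E ⁻¹' U, hU.preimage (FiberBundle.continuous_proj F E), heU,
    (Homeomorph.preimageOfCompEqFst (fun q => by rw [hφψ]) U).trans <|
      (hG.prodHomeomorphOfIsInvertible hinv).trans <| (Homeomorph.prodAssoc _ _ _).symm.trans <|
        (t.preimageHomeomorph hUt).symm.prodCongr (.refl _), ?_⟩
  rintro ⟨⟨b, v⟩, hz⟩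
  have hb : b ∈ t.baseSet := hUt (by simpa [hφψ] using hz)
  change t.toOpenPartialHomeomorph.symm (b, t.linearMapAtComp ψ b v) = φ (b, v)
  rw [hφψ, t.linearMapAtComp_apply hb]
  exact t.symm_apply_mk_proj (x := ⟨b, ψ b v⟩) (t.mem_source.2 hb)

/-- Let `E` be a topological real vector bundle of finite rank over `B` and let
`φ : B × V → Tot(E)` be a continuous map, where `V` is a finite-dimensional real vector
space, such that each `φ(b,·) : V → E_b` is linear (given by `ψ b`) and surjective.
Then `φ` is a fiber bundle: every `e ∈ Tot(E)`, lying over `b₀ = e.proj`, has an open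
neighborhood `A` with a homeomorphism `φ⁻¹(A) ≅ A × ker(φ(b₀,·))` commuting with the
projections to `A`. -/
theorem fiberwise_surjective_linear_isFiberBundle
    {B : Type} [TopologicalSpace B]
    (V : Type) [NormedAddCommGroup V] [NormedSpace ℝ V] [FiniteDimensional ℝ V]
    (F : Type) [NormedAddCommGroup F] [NormedSpace ℝ F] [FiniteDimensional ℝ F]
    (E : B → Type) [∀ b, AddCommGroup (E b)] [∀ b, Module ℝ (E b)]
    [∀ b, TopologicalSpace (E b)] [TopologicalSpace (TotalSpace F E)]
    [FiberBundle F E] [VectorBundle ℝ F E]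
    (φ : B × V → TotalSpace F E) (hφcont : Continuous φ)
    (ψ : ∀ b, V →ₗ[ℝ] E b)
    (hφψ : ∀ b v, φ (b, v) = TotalSpace.mk b (ψ b v))
    (hsurj : ∀ b, Function.Surjective (ψ b)) :
    ∀ e : TotalSpace F E,
      ∃ A : Set (TotalSpace F E), IsOpen A ∧ e ∈ A ∧
        ∃ h : (φ ⁻¹' A) ≃ₜ A × (LinearMap.ker (ψ e.proj)),
          ∀ z : φ ⁻¹' A, ((h z).1 : TotalSpace F E) = φ z :=
  fiberwise_surjective_linear_isFiberBundle_general V F E φ hφcont ψ hφψ hsurj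
end

section
/- Let E → B be a topological real vector bundle of finite rank over a compact topological space B, and let {s_j}_{j ∈ J} be a set of continuous sections of E such that for every b ∈ B the vectors {s_j(b)}_{j ∈ J} span the fiber E_b as a real vector space. Then there is a finite subset J₀ ⊆ J such that for every b ∈ B the vectors {s_j(b)}_{j ∈ J₀} already span E_b. -/
/-!
Near a point `b₀`, a local trivialization turns the sections into continuous maps into the
model fiber `F`. At `b₀` finitely many of them form a basis of `F`, and linear independence
of finitely many vectors is an open condition, so these finitely many sections still span
every fiber near `b₀`. Compactness of `B` then leaves finitely many such neighbourhoods.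
-/

open Bundle Filter Topology

theorem LinearEquiv.span_range_comp_eq_top_iff {R M N ι : Type*} [Semiring R]
    [AddCommMonoid M] [Module R M] [AddCommMonoid N] [Module R N] (ψ : M ≃ₗ[R] N) (f : ι → M) :
    Submodule.span R (Set.range fun i => ψ (f i)) = ⊤ ↔ Submodule.span R (Set.range f) = ⊤ := by
  rw [show (fun i => ψ (f i)) = ψ ∘ f from rfl, Set.range_comp,
    Submodule.span_image_linearEquiv, Submodule.map_eq_top_iff]

theorem CompactSpace.exists_finset_forall_of_eventually {X ι : Type*} [TopologicalSpace X]
    [CompactSpace X] {P : Finset ι → X → Prop} (hP : ∀ x, Monotone (P · x))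
    (h : ∀ x, ∃ t, ∀ᶠ y in 𝓝 x, P t y) : ∃ t, ∀ x, P t x := by
  classical
  choose t ht using h
  obtain ⟨c, -, hc⟩ :=
    isCompact_univ.elim_nhds_subcover (fun x => {y | P (t x) y}) fun x _ => ht x
  refine ⟨c.biUnion t, fun y => ?_⟩
  obtain ⟨x, hx, hy⟩ := Set.mem_iUnion₂.1 (hc (Set.mem_univ y))
  exact hP y (Finset.subset_biUnion_of_mem t hx) hy

section FiniteDimensional

variable {𝕜 : Type*} [NontriviallyNormedField 𝕜] [CompleteSpace 𝕜]
  {V : Type*} [NormedAddCommGroup V] [NormedSpace 𝕜 V] [FiniteDimensional 𝕜 V]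

theorem exists_finset_eventually_span_eq_top {ι : Type*} {v : ι → V}
    (hv : Submodule.span 𝕜 (Set.range v) = ⊤) :
    ∃ t : Finset ι, ∀ᶠ w in 𝓝 v, Submodule.span 𝕜 (Set.range fun i : t => w i) = ⊤ := by
  obtain ⟨κ, a, -, hspan, hli⟩ := exists_linearIndependent' 𝕜 v
  rw [hv] at hspan
  have : Finite κ := hli.finite
  have : Fintype κ := Fintype.ofFinite κ
  have hcard : Fintype.card κ = Module.finrank 𝕜 V :=
    (Module.finrank_eq_card_basis (Module.Basis.mk hli hspan.ge)).symm
  have hcomp : Continuous fun w : ι → V => w ∘ a := by fun_prop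
  refine ⟨(Set.finite_range a).toFinset, ?_⟩
  filter_upwards [hcomp.continuousAt.eventually hli.eventually] with w hw
  refine eq_top_mono (Submodule.span_mono ?_) (hw.span_eq_top_of_card_eq_finrank' hcard)
  rintro _ ⟨k, rfl⟩
  exact ⟨⟨a k, (Set.finite_range a).mem_toFinset.2 ⟨k, rfl⟩⟩, rfl⟩

end FiniteDimensional

section VectorBundle

variable {𝕜 B F : Type*} [NontriviallyNormedField 𝕜] [CompleteSpace 𝕜] [TopologicalSpace B]
  [NormedAddCommGroup F] [NormedSpace 𝕜 F] [FiniteDimensional 𝕜 F]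
  {E : B → Type*} [∀ b, AddCommGroup (E b)] [∀ b, Module 𝕜 (E b)] [∀ b, TopologicalSpace (E b)]
  [TopologicalSpace (TotalSpace F E)] [FiberBundle F E] [VectorBundle 𝕜 F E]

theorem exists_finset_eventually_span_sections_eq_top {J : Type*} {s : J → ∀ b, E b}
    (hs : ∀ j, Continuous fun b => (TotalSpace.mk b (s j b) : TotalSpace F E)) {b₀ : B}
    (hspan : Submodule.span 𝕜 (Set.range fun j => s j b₀) = ⊤) :
    ∃ t : Finset J, ∀ᶠ b in 𝓝 b₀, Submodule.span 𝕜 (Set.range fun j : t => s j b) = ⊤ := by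
  let e := trivializationAt F E b₀
  have hb₀ : b₀ ∈ e.baseSet := FiberBundle.mem_baseSet_trivializationAt F E b₀
  let φ (b : B) (j : J) : F := (e ⟨b, s j b⟩).2
  have hφ {b : B} (hb : b ∈ e.baseSet) :
      φ b = fun j => e.continuousLinearEquivAt 𝕜 b hb (s j b) := by
    ext j
    exact (congrArg Prod.snd (e.apply_eq_prod_continuousLinearEquivAt 𝕜 b hb (s j b)) :)
  have hφ_cont : ContinuousAt φ b₀ := by
    refine continuousAt_pi.2 fun j => continuous_snd.continuousAt.comp ?_
    exact (e.continuousOn.continuousAt (e.open_source.mem_nhds (e.mem_source.2 hb₀))).comp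
      (hs j).continuousAt
  obtain ⟨t, ht⟩ := exists_finset_eventually_span_eq_top (v := φ b₀) <| by
    simp only [hφ hb₀]
    exact (e.continuousLinearEquivAt 𝕜 b₀ hb₀).toLinearEquiv.span_range_comp_eq_top_iff _ |>.2 hspan
  refine ⟨t, ?_⟩
  filter_upwards [hφ_cont.eventually ht, e.open_baseSet.mem_nhds hb₀] with b hb hbase
  simp only [hφ hbase] at hb
  exact (e.continuousLinearEquivAt 𝕜 b hbase).toLinearEquiv.span_range_comp_eq_top_iff _ |>.1 hb

end VectorBundle

/-- Let `E` be a topological real vector bundle of finite rank over a compact space `B`,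
and let `(s_j)_{j ∈ J}` be continuous sections such that for every `b ∈ B` the vectors
`s_j(b)` span the fiber `E_b`.  Then some finite subfamily already spans every fiber. -/
theorem exists_finite_spanning_subfamily_of_sections
    {B : Type} [TopologicalSpace B] [CompactSpace B]
    (F : Type) [NormedAddCommGroup F] [NormedSpace ℝ F] [FiniteDimensional ℝ F]
    (E : B → Type) [∀ b, AddCommGroup (E b)] [∀ b, Module ℝ (E b)]
    [∀ b, TopologicalSpace (E b)] [TopologicalSpace (TotalSpace F E)]
    [FiberBundle F E] [VectorBundle ℝ F E]
    (J : Type) (s : J → ∀ b, E b)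
    (hscont : ∀ j, Continuous fun b => (TotalSpace.mk b (s j b) : TotalSpace F E))
    (hspan : ∀ b : B, Submodule.span ℝ (Set.range fun j => s j b) = ⊤) :
    ∃ J₀ : Finset J, ∀ b : B,
      Submodule.span ℝ (Set.range fun j : J₀ => s j.1 b) = ⊤ := by
  have hmono (b : B) :
      Monotone fun t : Finset J => Submodule.span ℝ (Set.range fun j : t => s j.1 b) = ⊤ := by
    intro t t' htt' ht
    refine eq_top_mono (Submodule.span_mono ?_) ht
    rintro _ ⟨j, rfl⟩
    exact ⟨⟨j, htt' j.2⟩, rfl⟩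
  exact CompactSpace.exists_finset_forall_of_eventually hmono fun b =>
    exists_finset_eventually_span_sections_eq_top hscont (hspan b)
end

section
/- Let E → B be a topological real vector bundle of finite rank over a compact Hausdorff space B, and let s₁, …, s_m be continuous sections of E such that for every b ∈ B the vectors s₁(b), …, s_m(b) span the fiber E_b as a real vector space. Then every continuous section σ of E can be written as σ = f₁·s₁ + … + f_m·s_m for some continuous functions f₁, …, f_m ∈ C(B, ℝ). -/
/-!
In a local trivialization the sections become a continuous family `L b : ℝᵐ →L F` of linear
maps with `L x` onto. If `R` is a right inverse of `L x`, then `L b ∘ R` is still invertible for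
`b` near `x` (invertibility is an open condition), and `R ∘ (L b ∘ R)⁻¹` is a right inverse of
`L b` depending continuously on `b`; this gives continuous coefficients near every point. The
coefficient vectors representing `σ b` form an affine, hence convex, set, so a partition of unity
glues the local coefficients.
-/

open Bundle Filter Topology

theorem ContinuousOn.exists_continuousOn_rightInverse_of_surjective
    {𝕜 X E F : Type*} [NontriviallyNormedField 𝕜] [CompleteSpace 𝕜] [TopologicalSpace X]
    [NormedAddCommGroup E] [NormedSpace 𝕜 E] [NormedAddCommGroup F] [NormedSpace 𝕜 F]
    [FiniteDimensional 𝕜 F] {L : X → E →L[𝕜] F} {U : Set X} {x : X} (hU : U ∈ 𝓝 x)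
    (hL : ContinuousOn L U) (hsurj : Function.Surjective (L x)) :
    ∃ W ∈ 𝓝 x, ∃ R : X → F →L[𝕜] E, ContinuousOn R W ∧ ∀ b ∈ W, (L b).comp (R b) = .id 𝕜 F := by
  have : CompleteSpace F := FiniteDimensional.complete 𝕜 F
  obtain ⟨R₀, hR₀⟩ := (L x : E →ₗ[𝕜] F).exists_rightInverse_of_surjective
    (LinearMap.range_eq_top.2 hsurj)
  let R₀' : F →L[𝕜] E := LinearMap.toContinuousLinearMap R₀
  let T : X → F →L[𝕜] F := fun b => (L b).comp R₀'
  have hT : ContinuousOn T U := hL.clm_comp continuousOn_const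
  have hTx : T x = 1 := ContinuousLinearMap.ext (LinearMap.congr_fun hR₀)
  refine ⟨U ∩ T ⁻¹' {A | IsUnit A}, inter_mem hU ((hT.continuousAt hU).preimage_mem_nhds
      (Units.isOpen.mem_nhds (by simp [hTx]))), fun b => R₀'.comp (Ring.inverse (T b)), ?_, ?_⟩
  · refine continuousOn_const.clm_comp fun b hb => ?_
    obtain ⟨u, hu⟩ := hb.2
    exact (hu ▸ NormedRing.inverse_continuousAt u).comp_continuousWithinAt
      ((hT b hb.1).mono Set.inter_subset_left)
  · intro b hb
    exact Ring.mul_inverse_cancel (T b) hb.2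

theorem exists_continuousOn_coeffs_of_span_eq_top
    {𝕜 X F ι : Type*} [NontriviallyNormedField 𝕜] [CompleteSpace 𝕜] [TopologicalSpace X]
    [NormedAddCommGroup F] [NormedSpace 𝕜 F] [FiniteDimensional 𝕜 F] [Fintype ι]
    {v : ι → X → F} {w : X → F} {U : Set X} {x : X} (hU : U ∈ 𝓝 x)
    (hv : ∀ i, ContinuousOn (v i) U) (hw : ContinuousOn w U)
    (hspan : Submodule.span 𝕜 (Set.range fun i => v i x) = ⊤) :
    ∃ W ∈ 𝓝 x, ∃ c : X → ι → 𝕜, ContinuousOn c W ∧ ∀ b ∈ W, w b = ∑ i, c b i • v i b := by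
  classical
  let P := (ContinuousLinearEquiv.piRing (𝕜 := 𝕜) (E := F) ι).symm
  let L : X → (ι → 𝕜) →L[𝕜] F := fun b => P fun i => v i b
  have hL : ∀ b c, L b c = ∑ i, c i • v i b := fun b c =>
    LinearEquiv.piRing_symm_apply 𝕜 (fun i => v i b) c
  have hsurj : Function.Surjective (L x) := fun y => by
    simpa only [hL] using (Submodule.mem_span_range_iff_exists_fun 𝕜).1 (hspan ▸ Submodule.mem_top)
  obtain ⟨W, hW, R, hR, hLR⟩ := ContinuousOn.exists_continuousOn_rightInverse_of_surjective hU
    (P.continuous.comp_continuousOn (continuousOn_pi.2 hv)) hsurj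
  refine ⟨W ∩ U, inter_mem hW hU, fun b => R b (w b),
    (hR.mono Set.inter_subset_left).clm_apply (hw.mono Set.inter_subset_right), fun b hb => ?_⟩
  rw [← hL, ← ContinuousLinearMap.comp_apply]
  exact (ContinuousLinearMap.ext_iff.1 (hLR b hb.1) (w b)).symm

theorem Bundle.Trivialization.continuousOn_linearMapAt_of_continuous
    (R : Type*) {B F : Type*} {E : B → Type*} [Semiring R] [TopologicalSpace B] [TopologicalSpace F]
    [AddCommMonoid F] [Module R F] [∀ b, AddCommMonoid (E b)] [∀ b, Module R (E b)]
    [TopologicalSpace (TotalSpace F E)] (e : Trivialization F (π F E)) [e.IsLinear R]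
    {s : ∀ b, E b} (hs : Continuous fun b => TotalSpace.mk' F b (s b)) :
    ContinuousOn (fun b => e.linearMapAt R b (s b)) e.baseSet := by
  refine (continuous_snd.comp_continuousOn
    (e.continuousOn.comp hs.continuousOn fun b hb => e.mem_source.2 hb)).congr fun b hb => ?_
  simp [e.coe_linearMapAt_of_mem hb]

theorem Bundle.exists_continuousOn_section_coeffs_of_span_eq_top
    {𝕜 B F ι : Type*} {E : B → Type*} [NontriviallyNormedField 𝕜] [CompleteSpace 𝕜]
    [TopologicalSpace B] [NormedAddCommGroup F] [NormedSpace 𝕜 F] [FiniteDimensional 𝕜 F]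
    [Fintype ι] [∀ b, AddCommGroup (E b)] [∀ b, Module 𝕜 (E b)] [∀ b, TopologicalSpace (E b)]
    [TopologicalSpace (TotalSpace F E)] [FiberBundle F E] [VectorBundle 𝕜 F E]
    {s : ι → ∀ b, E b} {σ : ∀ b, E b} (hs : ∀ i, Continuous fun b => TotalSpace.mk' F b (s i b))
    (hσ : Continuous fun b => TotalSpace.mk' F b (σ b)) {x : B}
    (hspan : Submodule.span 𝕜 (Set.range fun i => s i x) = ⊤) :
    ∃ W ∈ 𝓝 x, ∃ c : B → ι → 𝕜, ContinuousOn c W ∧ ∀ b ∈ W, σ b = ∑ i, c b i • s i b := by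
  let e := trivializationAt F E x
  have hx : x ∈ e.baseSet := mem_baseSet_trivializationAt F E x
  have hspan' : Submodule.span 𝕜 (Set.range fun i => e.linearMapAt 𝕜 x (s i x)) = ⊤ := by
    rw [Set.range_comp' (e.linearMapAt 𝕜 x) (fun i => s i x), Submodule.span_image, hspan,
      Submodule.map_top, LinearMap.range_eq_top]
    exact fun y => ⟨e.symm x y, e.linearMapAt_symm hx y⟩
  obtain ⟨W, hW, c, hc, hσc⟩ := exists_continuousOn_coeffs_of_span_eq_top
    (e.open_baseSet.mem_nhds hx) (fun i => e.continuousOn_linearMapAt_of_continuous 𝕜 (hs i))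
    (e.continuousOn_linearMapAt_of_continuous 𝕜 hσ) hspan'
  refine ⟨W ∩ e.baseSet, inter_mem hW (e.open_baseSet.mem_nhds hx), c,
    hc.mono Set.inter_subset_left, fun b hb => ?_⟩
  calc σ b = e.symmₗ 𝕜 b (e.linearMapAt 𝕜 b (σ b)) := (e.symmₗ_linearMapAt hb.2 _).symm
    _ = ∑ i, c b i • s i b := by
      simp only [hσc b hb.1, map_sum, map_smul, e.symmₗ_linearMapAt hb.2]

/-- Let `E` be a topological real vector bundle of finite rank over a compact Hausdorff
space `B`, and let `s₁, …, s_m` be continuous sections such that for every `b ∈ B` the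
vectors `s₁(b), …, s_m(b)` span the fiber `E_b`.  Then every continuous section `σ` of `E`
can be written as `σ = f₁ • s₁ + … + f_m • s_m` with `f₁, …, f_m ∈ C(B, ℝ)`. -/
theorem exists_continuousb_combination_of_spanning_sections
    {B : Type} [TopologicalSpace B] [CompactSpace B] [T2Space B]
    (F : Type) [NormedAddCommGroup F] [NormedSpace ℝ F] [FiniteDimensional ℝ F]
    (E : B → Type) [∀ b, AddCommGroup (E b)] [∀ b, Module ℝ (E b)]
    [∀ b, TopologicalSpace (E b)] [TopologicalSpace (TotalSpace F E)]
    [FiberBundle F E] [VectorBundle ℝ F E]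
    (m : ℕ) (s : Fin m → ∀ b, E b)
    (hscont : ∀ i, Continuous fun b => (TotalSpace.mk b (s i b) : TotalSpace F E))
    (hspan : ∀ b : B, Submodule.span ℝ (Set.range fun i => s i b) = ⊤)
    (σ : ∀ b, E b)
    (hσcont : Continuous fun b => (TotalSpace.mk b (σ b) : TotalSpace F E)) :
    ∃ f : Fin m → C(B, ℝ), ∀ b : B, σ b = ∑ i, (f i) b • s i b := by
  have hconvex : ∀ b, Convex ℝ {c : Fin m → ℝ | σ b = ∑ i, c i • s i b} := fun b => by
    have h := (convex_singleton (σ b)).linear_preimage (Fintype.linearCombination ℝ fun i => s i b)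
    simpa only [Set.preimage, Set.mem_singleton_iff, Fintype.linearCombination_apply,
      eq_comm (b := σ b)] using h
  obtain ⟨c, hc⟩ := exists_continuous_forall_mem_convex_of_local hconvex fun x =>
    Bundle.exists_continuousOn_section_coeffs_of_span_eq_top hscont hσcont (hspan x)
  exact ⟨fun i => ⟨fun b => c b i, (continuous_apply i).comp c.continuous⟩, hc⟩
end
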